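/- arXiv:2507.01748 — 2 statements merged into one kernel-verified Lean document; each statement's English description precedes it below -/
import Mathlib

section
/- For every t ≠ 0 one has t/G⁻¹(t) ≥ g(G⁻¹(t)); equivalently, 0 ≤ g(G⁻¹(t))·G⁻¹(t) ≤ t for t > 0 and t ≤ g(G⁻¹(t))·G⁻¹(t) ≤ 0 for t < 0. -/
/-! Put `x = G⁻¹(t)`. Since `g` is even, `G` is odd, and `g ≥ 0`, so `x` has the sign of `t` and
everything reduces to `g(x)·x ≤ G(x) = ∫₀ˣ g` for `x ≥ 0`. This holds because `g` is
nonincreasing on `[0, ∞)`: each branch is, and `α, β` are chosen so that the two branches meet at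
`s = (αk)^{-1/2}`. -/

open Real Filter Set

/-- The constant α = (9+3√5)/2. -/
noncomputable def alph : ℝ := (9 + 3 * Real.sqrt 5) / 2

/-- The constant β = 2 α^{3/2} √(α−1). -/
noncomputable def bet : ℝ := 2 * alph ^ ((3 : ℝ) / 2) * Real.sqrt (alph - 1)

/-- The change-of-variable function g (extended evenly to negative arguments):
g(s) = √(1 − k s²) for |s| < (αk)^{−1/2}, and g(s) = 1/(βk s²) + √3/2 for |s| ≥ (αk)^{−1/2}. -/
noncomputable def g (k s : ℝ) : ℝ :=
  if |s| < 1 / Real.sqrt (alph * k) then Real.sqrt (1 - k * s ^ 2)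
  else 1 / (bet * k * s ^ 2) + Real.sqrt 3 / 2

/-- G(t) = ∫₀ᵗ g(s) ds. -/
noncomputable def G (k t : ℝ) : ℝ := ∫ s in (0 : ℝ)..t, g k s

theorem AntitoneOn.mul_sub_le_intervalIntegral {f : ℝ → ℝ} {a b : ℝ} (hab : a ≤ b)
    (hf : AntitoneOn f (Icc a b)) : f b * (b - a) ≤ ∫ s in a..b, f s := by
  have hint : IntervalIntegrable f MeasureTheory.volume a b :=
    AntitoneOn.intervalIntegrable (by rwa [uIcc_of_le hab])
  calc f b * (b - a) = ∫ _ in a..b, f b := by simp [mul_comm]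
    _ ≤ ∫ s in a..b, f s := intervalIntegral.integral_mono_on hab intervalIntegrable_const hint
          fun s hs => hf hs (right_mem_Icc.2 hab) hs.2

theorem Function.Even.intervalIntegral_zero_neg {f : ℝ → ℝ} (hf : Function.Even f) (x : ℝ) :
    ∫ s in (0 : ℝ)..-x, f s = -∫ s in (0 : ℝ)..x, f s := by
  rw [← intervalIntegral.integral_symm]
  simpa [hf _] using intervalIntegral.integral_comp_neg (a := 0) (b := -x) f

lemma one_lt_alph : 1 < alph := by unfold alph; linarith [Real.sqrt_nonneg 5]

lemma alph_pos : 0 < alph := zero_lt_one.trans one_lt_alph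

lemma sqrt_alph_mul_alph_sub_one : √(alph * (alph - 1)) = √3 * (2 + √5) := by
  rw [Real.sqrt_eq_iff_mul_self_eq_of_pos (by positivity)]
  have h3 : √3 ^ 2 = 3 := Real.sq_sqrt (by norm_num)
  have h5 : √5 ^ 2 = 5 := Real.sq_sqrt (by norm_num)
  unfold alph
  linear_combination (2 + √5) ^ 2 * h3 + 3 / 4 * h5

lemma bet_eq : bet = 2 * alph * (√3 * (2 + √5)) := by
  rw [bet, show (3 : ℝ) / 2 = 1 + 1 / 2 by norm_num, Real.rpow_add alph_pos, Real.rpow_one,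
    ← Real.sqrt_eq_rpow, mul_assoc, mul_assoc, ← Real.sqrt_mul alph_pos.le,
    sqrt_alph_mul_alph_sub_one, mul_assoc]

lemma bet_pos : 0 < bet := by
  rw [bet_eq]; have := alph_pos; positivity

/-- The common value of both branches of `g` at `|s| = (αk)^{-1/2}`. -/
lemma alph_div_bet_add_eq : alph / bet + √3 / 2 = √(1 - 1 / alph) := by
  have h3 : √3 ^ 2 = 3 := Real.sq_sqrt (by norm_num)
  have h5 : √5 ^ 2 = 5 := Real.sq_sqrt (by norm_num)
  have ha := alph_pos
  have hsqrt : √(1 - 1 / alph) = √3 * (2 + √5) / alph := by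
    rw [Real.sqrt_eq_iff_mul_self_eq_of_pos (by positivity), div_mul_div_comm,
      ← sqrt_alph_mul_alph_sub_one,
      Real.mul_self_sqrt (mul_nonneg ha.le (sub_pos.2 one_lt_alph).le)]
    field_simp
  rw [hsqrt, bet_eq]
  field_simp
  unfold alph
  linear_combination (1 - (√5 + √5 ^ 2) / 2) * h3 - 3 / 2 * h5

section g
variable {k s : ℝ}

lemma abs_lt_threshold_iff (hk : 0 < k) : |s| < 1 / √(alph * k) ↔ alph * k * s ^ 2 < 1 := by
  have hak : 0 < alph * k := mul_pos alph_pos hk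
  rw [lt_div_iff₀ (Real.sqrt_pos.2 hak), ← Real.sqrt_sq_eq_abs, ← Real.sqrt_mul (sq_nonneg s),
    Real.sqrt_lt' one_pos, one_pow, mul_comm]

lemma g_of_inner (hk : 0 < k) (hs : alph * k * s ^ 2 < 1) : g k s = √(1 - k * s ^ 2) :=
  if_pos ((abs_lt_threshold_iff hk).2 hs)

lemma g_of_outer (hk : 0 < k) (hs : 1 ≤ alph * k * s ^ 2) :
    g k s = 1 / (bet * k * s ^ 2) + √3 / 2 :=
  if_neg (mt (abs_lt_threshold_iff hk).1 hs.not_gt)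

lemma g_nonneg (hk : 0 ≤ k) (s : ℝ) : 0 ≤ g k s := by
  have := bet_pos
  unfold g; split_ifs <;> positivity

lemma bet_mul_pos_of_outer (hk : 0 < k) (hs : 1 ≤ alph * k * s ^ 2) : 0 < bet * k * s ^ 2 := by
  have := bet_pos
  have : 0 < s ^ 2 := pos_of_mul_pos_right (one_pos.trans_le hs) (mul_pos alph_pos hk).le
  positivity

lemma g_le_of_outer (hk : 0 < k) (hs : 1 ≤ alph * k * s ^ 2) : g k s ≤ alph / bet + √3 / 2 := by
  have hb := bet_pos
  rw [g_of_outer hk hs, add_le_add_iff_right, div_le_div_iff₀ (bet_mul_pos_of_outer hk hs) hb]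
  nlinarith [mul_le_mul_of_nonneg_left hs hb.le]

lemma le_g_of_inner (hk : 0 < k) (hs : alph * k * s ^ 2 < 1) : alph / bet + √3 / 2 ≤ g k s := by
  rw [alph_div_bet_add_eq, g_of_inner hk hs]
  gcongr
  rw [le_div_iff₀ alph_pos]
  linarith

lemma g_antitoneOn (hk : 0 < k) : AntitoneOn (g k) (Ici 0) := by
  intro s hs x _ hsx
  have hsq : alph * k * s ^ 2 ≤ alph * k * x ^ 2 := by
    have := alph_pos
    gcongr
  by_cases hs_in : alph * k * s ^ 2 < 1
  · by_cases hx_in : alph * k * x ^ 2 < 1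
    · rw [g_of_inner hk hx_in, g_of_inner hk hs_in]
      gcongr
    · exact (g_le_of_outer hk (not_lt.1 hx_in)).trans (le_g_of_inner hk hs_in)
  · push Not at hs_in
    rw [g_of_outer hk (hs_in.trans hsq), g_of_outer hk hs_in]
    have := bet_pos
    gcongr
    exact bet_mul_pos_of_outer hk hs_in

end g

section G
variable {k x : ℝ}

lemma g_even (k : ℝ) : Function.Even (g k) := by
  intro s
  simp only [g, abs_neg, neg_sq]

lemma G_neg (k x : ℝ) : G k (-x) = -G k x :=
  (g_even k).intervalIntegral_zero_neg x

lemma g_mul_le_G (hk : 0 < k) (hx : 0 ≤ x) : g k x * x ≤ G k x := by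
  simpa [G] using ((g_antitoneOn hk).mono Icc_subset_Ici_self).mul_sub_le_intervalIntegral hx

lemma G_le_g_mul (hk : 0 < k) (hx : x ≤ 0) : G k x ≤ g k x * x := by
  have := g_mul_le_G hk (neg_nonneg.2 hx)
  rw [G_neg, g_even k x] at this
  linarith

lemma pos_of_G_pos (hk : 0 < k) (h : 0 < G k x) : 0 < x := by
  by_contra! hx
  nlinarith [G_le_g_mul hk hx, g_nonneg hk.le x]

lemma neg_of_G_neg (hk : 0 < k) (h : G k x < 0) : x < 0 := by
  by_contra! hx
  nlinarith [g_mul_le_G hk hx, g_nonneg hk.le x]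

end G

theorem stmt10_general (k : ℝ) (hk : 0 < k) (Ginv : ℝ → ℝ)
    (hR : Function.RightInverse Ginv (G k)) :
    (∀ t : ℝ, t ≠ 0 → g k (Ginv t) ≤ t / Ginv t) ∧
    (∀ t : ℝ, 0 < t → 0 ≤ g k (Ginv t) * Ginv t ∧ g k (Ginv t) * Ginv t ≤ t) ∧
    (∀ t : ℝ, t < 0 → t ≤ g k (Ginv t) * Ginv t ∧ g k (Ginv t) * Ginv t ≤ 0) := by
  have hG : ∀ t, G k (Ginv t) = t := hR
  have upper (t : ℝ) (ht : 0 < t) : 0 < Ginv t ∧ g k (Ginv t) * Ginv t ≤ t := by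
    have hx := pos_of_G_pos hk (ht.trans_eq (hG t).symm)
    exact ⟨hx, (g_mul_le_G hk hx.le).trans_eq (hG t)⟩
  have lower (t : ℝ) (ht : t < 0) : Ginv t < 0 ∧ t ≤ g k (Ginv t) * Ginv t := by
    have hx := neg_of_G_neg hk ((hG t).trans_lt ht)
    exact ⟨hx, (hG t).symm.trans_le (G_le_g_mul hk hx.le)⟩
  refine ⟨fun t ht => ?_, fun t ht => ?_, fun t ht => ?_⟩
  · rcases ht.lt_or_gt with ht | ht
    · obtain ⟨hx, h⟩ := lower t ht
      rwa [le_div_iff_of_neg hx]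
    · obtain ⟨hx, h⟩ := upper t ht
      rwa [le_div_iff₀ hx]
  · obtain ⟨hx, h⟩ := upper t ht
    exact ⟨mul_nonneg (g_nonneg hk.le _) hx.le, h⟩
  · obtain ⟨hx, h⟩ := lower t ht
    exact ⟨h, mul_nonpos_of_nonneg_of_nonpos (g_nonneg hk.le _) hx.le⟩

/-- For t ≠ 0, t/G⁻¹(t) ≥ g(G⁻¹(t)); equivalently 0 ≤ g(G⁻¹(t))·G⁻¹(t) ≤ t for t > 0
and t ≤ g(G⁻¹(t))·G⁻¹(t) ≤ 0 for t < 0. -/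
theorem stmt10 (k : ℝ) (hk : 0 < k) (Ginv : ℝ → ℝ)
    (hL : Function.LeftInverse Ginv (G k)) (hR : Function.RightInverse Ginv (G k)) :
    (∀ t : ℝ, t ≠ 0 → g k (Ginv t) ≤ t / Ginv t) ∧
    (∀ t : ℝ, 0 < t → 0 ≤ g k (Ginv t) * Ginv t ∧ g k (Ginv t) * Ginv t ≤ t) ∧
    (∀ t : ℝ, t < 0 → t ≤ g k (Ginv t) * Ginv t ∧ g k (Ginv t) * Ginv t ≤ 0) :=
  stmt10_general k hk Ginv hR
end

section
/- The function h(s) = G⁻¹(s)/g(G⁻¹(s)) is differentiable on ℝ with h'(s) = (1 − G⁻¹(s) g'(G⁻¹(s))/g(G⁻¹(s))) / g(G⁻¹(s))² > 0, so h is strictly increasing; moreover, for every C > 0 there exists η > 0 such that (h(a) − h(b))(a − b) ≥ η (a − b)² whenever |a| ≤ C and |b| ≤ C. -/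
open Real Filter Set

/-! Writing `u = G⁻¹(s)`, the inverse function theorem gives `u' = 1 / g(u)`, hence
`h = u / g(u)` has `h' = (1 - u g'(u) / g(u)) / g(u)²`. Since `g ≤ 1` and `g` decreases in `|s|`
(`s g'(s) ≤ 0`), `h' ≥ 1`: so `h - id` is monotone and `η = 1` works for every `C`.
The only delicate point is that `g` is differentiable at `±(αk)^{-1/2}`. Writing `g(s) = gOfSq(s²)`,
the two pieces of `gOfSq` meet at `(αk)⁻¹` with equal values because `α² = 9α - 9`, and with equal
slopes because `β = 2α²√(1 - 1/α)`. -/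

theorem sq_sub_le_sub_mul_sub_of_one_le_deriv {f f' : ℝ → ℝ} (hf : ∀ x, HasDerivAt f (f' x) x)
    (hf' : ∀ x, 1 ≤ f' x) (a b : ℝ) : (a - b) ^ 2 ≤ (f a - f b) * (a - b) := by
  have hmono : Monotone fun x => f x - x :=
    monotone_of_hasDerivAt_nonneg (fun x => (hf x).sub (hasDerivAt_id' x))
      (fun x => sub_nonneg.2 (hf' x))
  rcases le_total b a with hab | hab
  · nlinarith [hmono hab]
  · nlinarith [hmono hab]

theorem HasDerivAt.ite_lt {f₁ f₂ : ℝ → ℝ} {a d : ℝ} (h₁ : HasDerivAt f₁ d a)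
    (h₂ : HasDerivAt f₂ d a) (ha : f₁ a = f₂ a) :
    HasDerivAt (fun x => if x < a then f₁ x else f₂ x) d a := by
  have hl : HasDerivWithinAt (fun x => if x < a then f₁ x else f₂ x) d (Iic a) a := by
    refine h₁.hasDerivWithinAt.congr (fun x hx => ?_) (by simp [ha])
    rcases (mem_Iic.1 hx).lt_or_eq with hxa | rfl
    · simp [hxa]
    · simp [ha]
  have hr : HasDerivWithinAt (fun x => if x < a then f₁ x else f₂ x) d (Ici a) a :=
    h₂.hasDerivWithinAt.congr (fun x hx => if_neg (not_lt.2 hx)) (if_neg (lt_irrefl a))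
  simpa [Iic_union_Ici] using hl.union hr

theorem hasDerivAt_sqrt_one_sub_mul {k u : ℝ} (h : k * u < 1) :
    HasDerivAt (fun v => √(1 - k * v)) (-k / (2 * √(1 - k * u))) u := by
  simpa using (((hasDerivAt_id' u).const_mul k).const_sub 1).sqrt (by linarith)

theorem hasDerivAt_one_div_mul_add {c d u : ℝ} (hc : c ≠ 0) (hu : u ≠ 0) :
    HasDerivAt (fun v => 1 / (c * v) + d) (-1 / (c * u ^ 2)) u := by
  have h := (((hasDerivAt_id' u).const_mul c).inv (mul_ne_zero hc hu)).add_const d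
  simp only [one_div]
  exact h.congr_deriv (by field_simp)

theorem one_le_one_sub_mul_div_div_sq {x y d : ℝ} (hy : 0 < y) (hy1 : y ≤ 1) (hxd : x * d ≤ 0) :
    1 ≤ (1 - x * d / y) / y ^ 2 := by
  have hsq : y ^ 2 ≤ 1 := pow_le_one₀ hy.le hy1
  rw [le_div_iff₀ (by positivity)]
  have : 0 ≤ -(x * d / y) := neg_nonneg.2 (div_nonpos_of_nonpos_of_nonneg hxd hy.le)
  linarith

section InverseQuotient

variable {g F Finv : ℝ → ℝ}

theorem hasDerivAt_inverse_of_hasDerivAt_pos (hF : ∀ x, HasDerivAt F (g x) x)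
    (hg : ∀ x, 0 < g x) (hL : Function.LeftInverse Finv F) (hR : Function.RightInverse Finv F)
    (s : ℝ) : HasDerivAt Finv (g (Finv s))⁻¹ s := by
  have hFmono : StrictMono F := strictMono_of_hasDerivAt_pos hF hg
  have hmono : Monotone Finv := fun a b hab => by
    rwa [← hFmono.le_iff_le, hR a, hR b]
  exact (hF (Finv s)).of_local_left_inverse
    (hmono.continuous_of_surjective hL.surjective).continuousAt (hg _).ne'
    (Eventually.of_forall hR)

theorem HasDerivAt.div_comp_of_hasDerivAt_inv {u : ℝ → ℝ} {g' s : ℝ}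
    (hu : HasDerivAt u (g (u s))⁻¹ s) (hg : HasDerivAt g g' (u s)) (hg0 : g (u s) ≠ 0) :
    HasDerivAt (fun v => u v / g (u v)) ((1 - u s * g' / g (u s)) / g (u s) ^ 2) s := by
  have hgu : HasDerivAt (fun v => g (u v)) (g' * (g (u s))⁻¹) s := hg.comp s hu
  refine (hu.div hgu hg0).congr_deriv ?_
  field_simp

end InverseQuotient

section Constants

lemma six_lt_alph : 6 < alph := by
  have : 1 < √5 := (lt_sqrt zero_le_one).2 (by norm_num)
  unfold alph; linarith

lemma alph_sq_eq : alph ^ 2 = 9 * alph - 9 := by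
  have h5 : √5 ^ 2 = 5 := sq_sqrt (by norm_num)
  unfold alph; linear_combination (9 / 4) * h5

lemma sqrt_one_sub_inv_alph_pos : 0 < √(1 - alph⁻¹) :=
  sqrt_pos.2 (sub_pos.2 (inv_lt_one_of_one_lt₀ (by linarith [six_lt_alph])))

lemma sq_sqrt_one_sub_inv_alph : √(1 - alph⁻¹) ^ 2 = 1 - alph⁻¹ :=
  sq_sqrt (sqrt_pos.1 sqrt_one_sub_inv_alph_pos).le

lemma alph_mul_sqrt_one_sub_inv_alph : alph * √(1 - alph⁻¹) = √(alph * (alph - 1)) := by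
  have := alph_pos.ne'
  rw [show alph * (alph - 1) = alph ^ 2 * (1 - alph⁻¹) by field_simp,
    sqrt_mul (sq_nonneg _), sqrt_sq alph_pos.le]

lemma bet_eq_s12 : bet = 2 * alph ^ 2 * √(1 - alph⁻¹) := by
  have h32 : alph ^ ((3 : ℝ) / 2) = alph * √alph := by
    rw [show (3 : ℝ) / 2 = 1 + 1 / 2 by norm_num, rpow_add alph_pos, rpow_one, ← sqrt_eq_rpow]
  have hprod : √alph * √(alph - 1) = alph * √(1 - alph⁻¹) := by
    rw [← sqrt_mul alph_pos.le, alph_mul_sqrt_one_sub_inv_alph]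
  rw [bet, h32]
  linear_combination (2 * alph) * hprod

lemma sqrt_three_mul_alph_mul_sqrt : √3 * (alph * √(1 - alph⁻¹)) = 2 * alph - 3 := by
  have h : 3 * (alph * (alph - 1)) = (2 * alph - 3) ^ 2 := by linear_combination -alph_sq_eq
  rw [alph_mul_sqrt_one_sub_inv_alph, ← sqrt_mul zero_le_three, h,
    sqrt_sq (by linarith [six_lt_alph])]

end Constants

noncomputable def gOfSq (k u : ℝ) : ℝ :=
  if u < (alph * k)⁻¹ then √(1 - k * u) else 1 / (bet * k * u) + √3 / 2

noncomputable def gOfSqDeriv (k u : ℝ) : ℝ :=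
  if u < (alph * k)⁻¹ then -k / (2 * √(1 - k * u)) else -1 / (bet * k * u ^ 2)

section gOfSq

variable {k : ℝ}

lemma mul_inv_alph_mul_cancel (hk : 0 < k) : k * (alph * k)⁻¹ = alph⁻¹ := by
  field_simp [hk.ne']

lemma mul_lt_one_of_le_threshold (hk : 0 < k) {u : ℝ} (hu : u ≤ (alph * k)⁻¹) : k * u < 1 := by
  calc k * u ≤ k * (alph * k)⁻¹ := mul_le_mul_of_nonneg_left hu hk.le
    _ = alph⁻¹ := mul_inv_alph_mul_cancel hk
    _ < 1 := inv_lt_one_of_one_lt₀ (by linarith [six_lt_alph])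

lemma gOfSq_pieces_eq_at_threshold (hk : 0 < k) :
    √(1 - k * (alph * k)⁻¹) = 1 / (bet * k * (alph * k)⁻¹) + √3 / 2 := by
  have hc := sqrt_one_sub_inv_alph_pos
  have hsq := sq_sqrt_one_sub_inv_alph
  have h3 := sqrt_three_mul_alph_mul_sqrt
  rw [mul_inv_alph_mul_cancel hk, show bet * k * (alph * k)⁻¹ = bet / alph by field_simp [hk.ne'],
    bet_eq_s12]
  generalize √(1 - alph⁻¹) = c at hc hsq h3 ⊢
  have := alph_pos.ne'
  field_simp
  linear_combination (2 * alph) * hsq - h3 - 2 * mul_inv_cancel₀ alph_pos.ne'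

lemma gOfSq_slopes_eq_at_threshold (hk : 0 < k) :
    -k / (2 * √(1 - k * (alph * k)⁻¹)) = -1 / (bet * k * ((alph * k)⁻¹) ^ 2) := by
  have := sqrt_one_sub_inv_alph_pos.ne'
  have := alph_pos.ne'
  rw [mul_inv_alph_mul_cancel hk, bet_eq_s12]
  field_simp

theorem hasDerivAt_gOfSq (hk : 0 < k) (u : ℝ) : HasDerivAt (gOfSq k) (gOfSqDeriv k u) u := by
  have hbk : bet * k ≠ 0 := (mul_pos bet_pos hk).ne'
  have hthr : 0 < (alph * k)⁻¹ := inv_pos.2 (mul_pos alph_pos hk)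
  rcases lt_trichotomy u (alph * k)⁻¹ with hu | rfl | hu
  · rw [gOfSqDeriv, if_pos hu]
    exact (hasDerivAt_sqrt_one_sub_mul (mul_lt_one_of_le_threshold hk hu.le)).congr_of_eventuallyEq
      ((eventually_lt_nhds hu).mono fun v hv => if_pos hv)
  · rw [gOfSqDeriv, if_neg (lt_irrefl _)]
    refine HasDerivAt.ite_lt ?_ (hasDerivAt_one_div_mul_add hbk hthr.ne')
      (gOfSq_pieces_eq_at_threshold hk)
    rw [← gOfSq_slopes_eq_at_threshold hk]
    exact hasDerivAt_sqrt_one_sub_mul (mul_lt_one_of_le_threshold hk le_rfl)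
  · have hu0 : u ≠ 0 := (hthr.trans hu).ne'
    rw [gOfSqDeriv, if_neg (not_lt.2 hu.le)]
    exact (hasDerivAt_one_div_mul_add hbk hu0).congr_of_eventuallyEq
      ((eventually_gt_nhds hu).mono fun v hv => if_neg (not_lt.2 hv.le))

lemma gOfSqDeriv_nonpos (hk : 0 < k) (u : ℝ) : gOfSqDeriv k u ≤ 0 := by
  have := bet_pos
  unfold gOfSqDeriv
  split_ifs
  · exact div_nonpos_of_nonpos_of_nonneg (by linarith) (by positivity)
  · exact div_nonpos_of_nonpos_of_nonneg (by norm_num) (by positivity)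

lemma gOfSq_pos (hk : 0 < k) (u : ℝ) : 0 < gOfSq k u := by
  unfold gOfSq
  split_ifs with hu
  · exact sqrt_pos.2 (sub_pos.2 (mul_lt_one_of_le_threshold hk hu.le))
  · have : 0 < u := (inv_pos.2 (mul_pos alph_pos hk)).trans_le (not_lt.1 hu)
    have := bet_pos
    positivity

lemma gOfSq_le_one (hk : 0 < k) {u : ℝ} (hu : 0 ≤ u) : gOfSq k u ≤ 1 := by
  unfold gOfSq
  split_ifs with hlt
  · exact sqrt_le_one.2 (by nlinarith)
  · have hthr : 0 < (alph * k)⁻¹ := inv_pos.2 (mul_pos alph_pos hk)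
    calc 1 / (bet * k * u) + √3 / 2 ≤ 1 / (bet * k * (alph * k)⁻¹) + √3 / 2 := by
          have := bet_pos
          gcongr
          exact not_lt.1 hlt
      _ = √(1 - k * (alph * k)⁻¹) := (gOfSq_pieces_eq_at_threshold hk).symm
      _ ≤ 1 := sqrt_le_one.2 (by nlinarith)

end gOfSq

theorem g_eq_gOfSq (k s : ℝ) : g k s = gOfSq k (s ^ 2) := by
  have hthr : |s| < 1 / √(alph * k) ↔ s ^ 2 < (alph * k)⁻¹ := by
    rw [one_div, ← sqrt_inv, lt_sqrt (abs_nonneg s), sq_abs]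
  simp only [g, gOfSq, hthr]

section g

variable {k : ℝ}

theorem hasDerivAt_g (hk : 0 < k) (s : ℝ) :
    HasDerivAt (g k) (gOfSqDeriv k (s ^ 2) * (2 * s)) s := by
  rw [show g k = fun s => gOfSq k (s ^ 2) from funext (g_eq_gOfSq k)]
  exact (hasDerivAt_gOfSq hk _).comp s (by simpa using hasDerivAt_pow 2 s)

lemma g_pos (hk : 0 < k) (s : ℝ) : 0 < g k s := by
  rw [g_eq_gOfSq]; exact gOfSq_pos hk _

lemma g_le_one (hk : 0 < k) (s : ℝ) : g k s ≤ 1 := by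
  rw [g_eq_gOfSq]; exact gOfSq_le_one hk (sq_nonneg s)

lemma mul_deriv_g_nonpos (hk : 0 < k) (s : ℝ) : s * deriv (g k) s ≤ 0 := by
  rw [(hasDerivAt_g hk s).deriv]
  nlinarith [gOfSqDeriv_nonpos hk (s ^ 2), sq_nonneg s]

theorem hasDerivAt_G (hk : 0 < k) (t : ℝ) : HasDerivAt (G k) (g k t) t := by
  have hg : Continuous (g k) :=
    continuous_iff_continuousAt.2 fun s => (hasDerivAt_g hk s).continuousAt
  exact intervalIntegral.integral_hasDerivAt_right (hg.intervalIntegrable 0 t)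
    (hg.stronglyMeasurableAtFilter _ _) hg.continuousAt

end g

/-- h(s) = G⁻¹(s)/g(G⁻¹(s)) is differentiable with
h'(s) = (1 − G⁻¹(s)g'(G⁻¹(s))/g(G⁻¹(s)))/g(G⁻¹(s))² > 0, hence strictly increasing;
and for every C > 0 there is η > 0 with (h(a) − h(b))(a − b) ≥ η(a − b)² for |a|,|b| ≤ C. -/
theorem stmt12 (k : ℝ) (hk : 0 < k) (Ginv : ℝ → ℝ)
    (hL : Function.LeftInverse Ginv (G k)) (hR : Function.RightInverse Ginv (G k)) :
    (∀ s : ℝ, HasDerivAt (fun v : ℝ => Ginv v / g k (Ginv v))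
      ((1 - Ginv s * deriv (g k) (Ginv s) / g k (Ginv s)) / (g k (Ginv s)) ^ 2) s) ∧
    (∀ s : ℝ, 0 < (1 - Ginv s * deriv (g k) (Ginv s) / g k (Ginv s)) / (g k (Ginv s)) ^ 2) ∧
    StrictMono (fun v : ℝ => Ginv v / g k (Ginv v)) ∧
    (∀ C : ℝ, 0 < C → ∃ η : ℝ, 0 < η ∧ ∀ a b : ℝ, |a| ≤ C → |b| ≤ C →
      η * (a - b) ^ 2 ≤ (Ginv a / g k (Ginv a) - Ginv b / g k (Ginv b)) * (a - b)) := by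
  have hGinv : ∀ s, HasDerivAt Ginv (g k (Ginv s))⁻¹ s :=
    hasDerivAt_inverse_of_hasDerivAt_pos (hasDerivAt_G hk) (g_pos hk) hL hR
  have hh : ∀ s, HasDerivAt (fun v => Ginv v / g k (Ginv v))
      ((1 - Ginv s * deriv (g k) (Ginv s) / g k (Ginv s)) / g k (Ginv s) ^ 2) s := fun s =>
    (hGinv s).div_comp_of_hasDerivAt_inv (hasDerivAt_g hk _).differentiableAt.hasDerivAt
      (g_pos hk _).ne'
  have hh1 : ∀ s, 1 ≤ (1 - Ginv s * deriv (g k) (Ginv s) / g k (Ginv s)) / g k (Ginv s) ^ 2 :=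
    fun s => one_le_one_sub_mul_div_div_sq (g_pos hk _) (g_le_one hk _) (mul_deriv_g_nonpos hk _)
  have hh0 := fun s => one_pos.trans_le (hh1 s)
  refine ⟨hh, hh0, strictMono_of_hasDerivAt_pos hh hh0, fun _ _ => ⟨1, one_pos, fun a b _ _ => ?_⟩⟩
  simpa using sq_sub_le_sub_mul_sub_of_one_le_deriv hh hh1 a b
end
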